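/- arXiv:1602.03075 — 3 statements merged into one kernel-verified Lean document; each statement's English description precedes it below -/
import Mathlib

section
/- For every integer r ≥ 2, the inequality Y_r > Y_{r-2} + m_{r-1}·(X_r - X_{r-2}) holds, where X_r = 4^r - 1, Y_r = r·4^r, and m_{r-1} = r - r/(2·4^{r-2}+1). -/
theorem stmt_6 (r : ℕ) (hr : 2 ≤ r) :
    (r : ℚ) * 4 ^ r >
      ((r - 2 : ℕ) : ℚ) * 4 ^ (r - 2) +
        ((r : ℚ) - (r : ℚ) / (2 * 4 ^ (r - 2) + 1)) *
          (((4 : ℚ) ^ r - 1) - ((4 : ℚ) ^ (r - 2) - 1)) := by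
  obtain ⟨k, rfl⟩ := Nat.exists_eq_add_of_le hr
  have h2 : 2 + k - 2 = k := by omega
  rw [h2]
  set a : ℚ := 4 ^ k with ha
  have ha1 : (1:ℚ) ≤ a := one_le_pow₀ (by norm_num)
  have hpos : (0:ℚ) < 2 * a + 1 := by linarith
  have hr4 : (4:ℚ) ^ (2 + k) = 16 * a := by rw [pow_add]; ring
  push_cast
  rw [hr4, gt_iff_lt, ← sub_pos]
  have key : ((2:ℚ) + k) * (16 * a) -
      ((k : ℚ) * a + (((2:ℚ) + k) - ((2:ℚ) + k) / (2 * a + 1)) * ((16 * a - 1) - (a - 1)))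
      = ((4 * a + 15 * k + 32) * a) / (2 * a + 1) := by
    field_simp
    ring
  rw [key]
  positivity
end

section
/- Let t ≥ 3 and define w_i ∈ ℤ² as the partial sums of the vectors v_j = (3(t-j), -3j). For any indices 0 ≤ i < j < k ≤ t-2, and any points p_i ∈ C_i, p_j ∈ C_j, p_k ∈ C_k (where C_s is the closed unit square with lower-left corner w_s), the triple (p_i, p_j, p_k) makes a right turn; i.e., the cross product (p_j - p_i) × (p_k - p_j) is negative. -/
/-- The lower-left corner of the `i`-th unit square in the
Erdős–Szekeres construction: `w i = ∑_{j=1}^{i} v_j`, `v_j = (3(t-j), -3j)`. -/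
def w (t i : ℕ) : ℝ × ℝ :=
  (∑ j ∈ Finset.Icc 1 i, (3 * ((t : ℝ) - j)), ∑ j ∈ Finset.Icc 1 i, (-3 * (j : ℝ)))

/-- Membership in the closed unit square with lower-left corner `w t s`. -/
def inC (t s : ℕ) (p : ℝ × ℝ) : Prop :=
  (w t s).1 ≤ p.1 ∧ p.1 ≤ (w t s).1 + 1 ∧ (w t s).2 ≤ p.2 ∧ p.2 ≤ (w t s).2 + 1

private lemma sum_lb (a b : ℕ) (hab : a ≤ b) (f : ℕ → ℝ) (c : ℝ)
    (h : ∀ m ∈ Finset.Ioc a b, c ≤ f m) :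
    ((b:ℝ) - a) * c ≤ ∑ m ∈ Finset.Ioc a b, f m := by
  have h2 := Finset.card_nsmul_le_sum (Finset.Ioc a b) f c h
  rwa [Nat.card_Ioc, nsmul_eq_mul, Nat.cast_sub hab] at h2

private lemma sum_ub (a b : ℕ) (hab : a ≤ b) (f : ℕ → ℝ) (c : ℝ)
    (h : ∀ m ∈ Finset.Ioc a b, f m ≤ c) :
    ∑ m ∈ Finset.Ioc a b, f m ≤ ((b:ℝ) - a) * c := by
  have h2 := Finset.sum_le_card_nsmul (Finset.Ioc a b) f c h
  rwa [Nat.card_Ioc, nsmul_eq_mul, Nat.cast_sub hab] at h2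

private lemma w_diff (t a b : ℕ) (hab : a ≤ b) :
    (w t b).1 - (w t a).1 = 3 * ∑ m ∈ Finset.Ioc a b, ((t:ℝ) - m) ∧
    (w t b).2 - (w t a).2 = -3 * ∑ m ∈ Finset.Ioc a b, (m:ℝ) := by
  have e : ∀ n : ℕ, Finset.Icc 1 n = Finset.Ioc 0 n := fun n => Finset.Icc_add_one_left_eq_Ioc 0 n
  unfold w
  simp only [e]
  constructor
  · have := Finset.sum_Ioc_consecutive (fun m : ℕ => 3 * ((t:ℝ) - m)) (Nat.zero_le a) hab
    rw [← this, Finset.mul_sum]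
    ring
  · have := Finset.sum_Ioc_consecutive (fun m : ℕ => -3 * (m:ℝ)) (Nat.zero_le a) hab
    rw [← this, Finset.mul_sum]
    ring

set_option maxHeartbeats 2000000 in
theorem stmt_15 (t : ℕ) (ht : 3 ≤ t) (i j k : ℕ)
    (hij : i < j) (hjk : j < k) (hk : k ≤ t - 2)
    (p q r : ℝ × ℝ) (hp : inC t i p) (hq : inC t j q) (hr : inC t k r) :
    (q.1 - p.1) * (r.2 - q.2) - (q.2 - p.2) * (r.1 - q.1) < 0 := by
  have hjt : j + 3 ≤ t := by omega
  have hkt : k + 2 ≤ t := by omega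
  have hijR : (i:ℝ) + 1 ≤ j := by exact_mod_cast hij
  have hjkR : (j:ℝ) + 1 ≤ k := by exact_mod_cast hjk
  have hjtR : (j:ℝ) + 3 ≤ t := by exact_mod_cast hjt
  have hktR : (k:ℝ) + 2 ≤ t := by exact_mod_cast hkt
  have hi0 : (0:ℝ) ≤ i := Nat.cast_nonneg i
  set A := ∑ m ∈ Finset.Ioc i j, (m:ℝ) with hAdef
  set B := ∑ m ∈ Finset.Ioc i j, ((t:ℝ) - m) with hBdef
  set C := ∑ m ∈ Finset.Ioc j k, (m:ℝ) with hCdef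
  set D := ∑ m ∈ Finset.Ioc j k, ((t:ℝ) - m) with hDdef
  set a := (j:ℝ) - i with hadef
  set b := (k:ℝ) - j with hbdef
  have ha1 : (1:ℝ) ≤ a := by rw [hadef]; linarith
  have hb1 : (1:ℝ) ≤ b := by rw [hbdef]; linarith
  -- sum bounds
  have hA : A ≤ a * j := sum_ub i j hij.le _ _ (fun m hm => by
    have := (Finset.mem_Ioc.mp hm).2; exact_mod_cast this)
  have hA0 : 0 ≤ A := Finset.sum_nonneg fun m _ => Nat.cast_nonneg m
  have hB : a * ((t:ℝ) - j) ≤ B := sum_lb i j hij.le _ _ (fun m hm => by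
    have h2 := (Finset.mem_Ioc.mp hm).2
    have : (m:ℝ) ≤ j := by exact_mod_cast h2
    linarith)
  have hC : b * ((j:ℝ) + 1) ≤ C := sum_lb j k hjk.le _ _ (fun m hm => by
    have h1 := (Finset.mem_Ioc.mp hm).1
    have : (j:ℝ) + 1 ≤ m := by exact_mod_cast h1
    linarith)
  have hD : D ≤ b * ((t:ℝ) - j - 1) := sum_ub j k hjk.le _ _ (fun m hm => by
    have h1 := (Finset.mem_Ioc.mp hm).1
    have : (j:ℝ) + 1 ≤ m := by exact_mod_cast h1
    linarith)
  have hDlo : b * ((t:ℝ) - k) ≤ D := sum_lb j k hjk.le _ _ (fun m hm => by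
    have h2 := (Finset.mem_Ioc.mp hm).2
    have : (m:ℝ) ≤ k := by exact_mod_cast h2
    linarith)
  have hAB : A + B = a * t := by
    rw [hAdef, hBdef, ← Finset.sum_add_distrib]
    have : ∀ m ∈ Finset.Ioc i j, (m:ℝ) + ((t:ℝ) - m) = (t:ℝ) := fun m _ => by ring
    rw [Finset.sum_congr rfl this, Finset.sum_const, Nat.card_Ioc,
      nsmul_eq_mul, Nat.cast_sub hij.le, hadef]
  have hCD : C + D = b * t := by
    rw [hCdef, hDdef, ← Finset.sum_add_distrib]
    have : ∀ m ∈ Finset.Ioc j k, (m:ℝ) + ((t:ℝ) - m) = (t:ℝ) := fun m _ => by ring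
    rw [Finset.sum_congr rfl this, Finset.sum_const, Nat.card_Ioc,
      nsmul_eq_mul, Nat.cast_sub hjk.le, hbdef]
  -- segment differences
  obtain ⟨hx1, hy1⟩ := w_diff t i j hij.le
  obtain ⟨hx2, hy2⟩ := w_diff t j k hjk.le
  rw [← hAdef] at hy1; rw [← hBdef] at hx1
  rw [← hCdef] at hy2; rw [← hDdef] at hx2
  clear_value A B C D
  obtain ⟨hp1, hp2, hp3, hp4⟩ := hp
  obtain ⟨hq1, hq2, hq3, hq4⟩ := hq
  obtain ⟨hr1, hr2, hr3, hr4⟩ := hr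
  -- point difference bounds
  have hdx1 : 3 * B - 1 ≤ q.1 - p.1 := by linarith
  have hdy1lo : -3 * A - 1 ≤ q.2 - p.2 := by linarith
  have hdx2hi : r.1 - q.1 ≤ 3 * D + 1 := by linarith
  have hdx2lo : 3 * D - 1 ≤ r.1 - q.1 := by linarith
  have hdy2hi : r.2 - q.2 ≤ -3 * C + 1 := by linarith
  -- positivity
  have hBpos : 3 ≤ B := by
    have := mul_le_mul ha1 (show (3:ℝ) ≤ (t:ℝ) - j by linarith) (by norm_num) (by linarith)
    linarith
  have hDpos : 2 ≤ D := by
    have := mul_le_mul hb1 (show (2:ℝ) ≤ (t:ℝ) - k by linarith) (by norm_num) (by linarith)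
    linarith
  have hCpos : 1 ≤ C := by
    have := mul_le_mul hb1 (show (1:ℝ) ≤ (j:ℝ) + 1 by linarith) (by norm_num) (by linarith)
    linarith
  have hdx1pos : 0 < q.1 - p.1 := by linarith
  have hdx2pos : 0 < r.1 - q.1 := by linarith
  have hdy2neg : r.2 - q.2 < 0 := by linarith
  -- key combination
  have key1 : (q.1 - p.1) * (r.2 - q.2) ≤ (3*B - 1) * (-3*C + 1) := by
    have h1 : (q.1 - p.1) * (r.2 - q.2) ≤ (3*B - 1) * (r.2 - q.2) :=
      mul_le_mul_of_nonpos_right hdx1 hdy2neg.le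
    have h2 : (3*B - 1) * (r.2 - q.2) ≤ (3*B - 1) * (-3*C + 1) := by
      apply mul_le_mul_of_nonneg_left hdy2hi; linarith
    linarith
  have key2 : (-3*A - 1) * (3*D + 1) ≤ (q.2 - p.2) * (r.1 - q.1) := by
    have h1 : (-3*A - 1) * (r.1 - q.1) ≤ (q.2 - p.2) * (r.1 - q.1) :=
      mul_le_mul_of_nonneg_right hdy1lo hdx2pos.le
    have h2 : (-3*A - 1) * (3*D + 1) ≤ (-3*A - 1) * (r.1 - q.1) :=
      mul_le_mul_of_nonpos_left hdx2hi (by linarith)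
    linarith
  -- product bounds
  have hj0 : (0:ℝ) ≤ j := Nat.cast_nonneg j
  have hBC : a * ((t:ℝ) - j) * (b * ((j:ℝ) + 1)) ≤ B * C := by
    apply mul_le_mul hB hC (mul_nonneg (by linarith) (by linarith)) (by linarith)
  have hAD : A * D ≤ a * j * (b * ((t:ℝ) - j - 1)) := by
    apply mul_le_mul hA hD (by linarith) (mul_nonneg (by linarith) hj0)
  -- BC - AD ≥ a*b*t
  have hprod : a * ((t:ℝ) - j) * (b * ((j:ℝ) + 1)) - a * j * (b * ((t:ℝ) - j - 1))
      = a * b * t := by ring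
  have h2 : a * b * (t:ℝ) ≤ B * C - A * D := by linarith
  -- 3ab ≥ a + b + 1
  have hab3 : a + b + 1 ≤ 3 * (a * b) := by
    have h0 : (0:ℝ) ≤ (a - 1) * (b - 1) :=
      mul_nonneg (by linarith) (by linarith)
    have h1 : (a - 1) * (b - 1) = a * b - a - b + 1 := by ring
    have h2 : (1:ℝ) ≤ a * b := by
      have := mul_le_mul ha1 hb1 (by norm_num) (by linarith)
      linarith
    linarith only [h0, h1, h2, ha1, hb1]
  have hT : (0:ℝ) < t := by linarith
  have h3 := mul_lt_mul_of_pos_right (show a + b < 3 * (a * b) by linarith) hT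
  have expand : (3*B - 1) * (-3*C + 1) - (-3*A - 1) * (3*D + 1)
      = 3*(A + B) + 3*(C + D) - 9*(B*C - A*D) := by ring
  linarith only [key1, key2, h2, hAB, hCD, expand, h3]
end

section
/- Suppose X and Y are finite planar point sets in general position such that X lies 'high above' Y: every line through two points of X passes above every point of Y, every line through two points of Y passes below every point of X, and additionally every point of Y has strictly smaller x-coordinate than every point of X. If Y has no p-cup and X has no q-cup, then X ∪ Y has no (p+q-1)-cup. -/
/-- Signed area cross product of the triple `(p, q, r)`.  For `p.1 < q.1`,
`cross p q r > 0` means `r` lies strictly above the line through `p` and `q`,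
and `cross p q r < 0` means `r` lies strictly below it. -/
def cross (p q r : ℝ × ℝ) : ℝ :=
  (q.1 - p.1) * (r.2 - p.2) - (q.2 - p.2) * (r.1 - p.1)

/-- A finite planar point set is in general position if no three
distinct points of it are collinear. -/
def GenPos (S : Finset (ℝ × ℝ)) : Prop :=
  ∀ p ∈ S, ∀ q ∈ S, ∀ r ∈ S, p ≠ q → q ≠ r → p ≠ r → cross p q r ≠ 0

/-- `f 0, …, f (j-1)` is a `j`-cup of `S`: points of `S` with strictly
increasing `x`-coordinates, each consecutive triple a left turn. -/
def IsCup (S : Finset (ℝ × ℝ)) (j : ℕ) (f : ℕ → ℝ × ℝ) : Prop :=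
  (∀ i < j, f i ∈ S) ∧
  (∀ i₁ i₂, i₁ < i₂ → i₂ < j → (f i₁).1 < (f i₂).1) ∧
  (∀ i, i + 2 < j → 0 < cross (f i) (f (i + 1)) (f (i + 2)))

theorem stmt_18 (X Y : Finset (ℝ × ℝ)) (p q : ℕ)
    (hgp : GenPos (X ∪ Y))
    -- every point of Y is strictly to the left of every point of X
    (hleft : ∀ y ∈ Y, ∀ x ∈ X, y.1 < x.1)
    -- every line through two points of X passes strictly above every point of Y
    (habove : ∀ a ∈ X, ∀ b ∈ X, a.1 < b.1 → ∀ c ∈ Y, cross a b c < 0)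
    -- every line through two points of Y passes strictly below every point of X
    (hbelow : ∀ a ∈ Y, ∀ b ∈ Y, a.1 < b.1 → ∀ c ∈ X, 0 < cross a b c)
    (hY : ¬ ∃ f : ℕ → ℝ × ℝ, IsCup Y p f)
    (hX : ¬ ∃ f : ℕ → ℝ × ℝ, IsCup X q f) :
    ¬ ∃ f : ℕ → ℝ × ℝ, IsCup (X ∪ Y) (p + q - 1) f := by
  rintro ⟨f, hfS, hfx, hfc⟩
  set L := p + q - 1 with hL
  rcases Nat.eq_zero_or_pos p with hp | hp
  · exact hY ⟨f, ⟨by omega, by omega, by omega⟩⟩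
  rcases Nat.eq_zero_or_pos q with hq | hq
  · exact hX ⟨f, ⟨by omega, by omega, by omega⟩⟩
  have hP : ∃ i, L ≤ i ∨ f i ∈ X := ⟨L, Or.inl le_rfl⟩
  set m := Nat.find hP with hm
  have hmL : m ≤ L := Nat.find_le (Or.inl le_rfl)
  have hYpre : ∀ i < m, f i ∈ Y := by
    intro i hi
    have h := Nat.find_min hP hi
    push_neg at h
    rcases Finset.mem_union.mp (hfS i (by omega)) with h' | h'
    · exact absurd h' h.2
    · exact h'
  have hXsuf : ∀ i, m ≤ i → i < L → f i ∈ X := by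
    intro i hmi hiL
    have hfm : f m ∈ X := (Nat.find_spec hP).resolve_left (by omega)
    rcases eq_or_lt_of_le hmi with h | h
    · exact h ▸ hfm
    rcases Finset.mem_union.mp (hfS i hiL) with h' | h'
    · exact h'
    · exact absurd (hfx m i h hiL) (not_lt.mpr (le_of_lt (hleft _ h' _ hfm)))
  by_cases hmp : p ≤ m
  · exact hY ⟨f, ⟨fun i hi => hYpre i (by omega),
      fun i₁ i₂ h1 h2 => hfx i₁ i₂ h1 (by omega),
      fun i hi => hfc i (by omega)⟩⟩
  · have hmq : m + q ≤ L := by omega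
    exact hX ⟨fun i => f (m + i), ⟨fun i hi => hXsuf (m + i) (by omega) (by omega),
      fun i₁ i₂ h1 h2 => hfx (m + i₁) (m + i₂) (by omega) (by omega),
      fun i hi => hfc (m + i) (by omega)⟩⟩
end
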